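/- arXiv:math/0603111 — 3 statements merged into one kernel-verified Lean document; each statement's English description precedes it below -/
import Mathlib

section
/- In Pic(S_7) ≅ ℤ^8 with K = (-3,1,...,1), every vector D with D·D = D·K = -1 is one of: e_i; e_0 - e_i - e_j (i<j); 2e_0 - Σ_{k=1}^7 e_k + e_i + e_j (i<j); or 3e_0 - Σ_{k=1}^7 e_k - e_i, giving 7 + 21 + 21 + 7 = 56 classes. -/
open Finset

/-- Intersection form on Pic = ℤ^8 with matrix diag(1,-1,...,-1). -/
def dot (x y : Fin 8 → ℤ) : ℤ := x 0 * y 0 - ∑ i : Fin 7, x i.succ * y i.succ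

/-- The canonical class K = (-3,1,...,1). -/
def K : Fin 8 → ℤ := fun i => if i = 0 then -3 else 1

/-- A (-1)-class: D·D = -1 and D·K = -1. -/
def isNegClass (D : Fin 8 → ℤ) : Prop := dot D D = -1 ∧ dot D K = -1


lemma int_nonneg_mul_sub (n : ℤ) : 0 ≤ n * (n - 1) := by
  rcases le_or_gt n 0 with h | h
  · have := mul_nonneg (neg_nonneg.2 h) (by omega : (0:ℤ) ≤ 1 - n)
    nlinarith
  · exact mul_nonneg (by omega) (by omega)

lemma int_nonneg_mul_add (n : ℤ) : 0 ≤ n * (n + 1) := by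
  have := int_nonneg_mul_sub (n + 1)
  nlinarith

lemma zero_ne_succ (r : Fin 7) : (0 : Fin 8) ≠ r.succ := (Fin.succ_ne_zero r).symm

lemma classify (D : Fin 8 → ℤ) (h : isNegClass D) :
      (∃ i : Fin 7, D = Pi.single i.succ 1) ∨
      (∃ i j : Fin 7, i < j ∧
        D = Pi.single (0 : Fin 8) 1 - Pi.single i.succ 1 - Pi.single j.succ 1) ∨
      (∃ i j : Fin 7, i < j ∧
        D = (fun m => if m = 0 then 2 else -1) + Pi.single i.succ 1 + Pi.single j.succ 1) ∨
      (∃ i : Fin 7, D = (fun m => if m = 0 then 3 else -1) - Pi.single i.succ 1) := by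
  obtain ⟨h1, h2⟩ := h
  simp only [dot, K, Fin.succ_ne_zero, if_false, if_true, reduceIte, mul_one,
    if_neg (Fin.succ_ne_zero _)] at h1 h2
  have hs : ∑ i : Fin 7, D i.succ = 1 - 3 * D 0 := by linarith
  have hq : ∑ i : Fin 7, D i.succ * D i.succ = D 0 * D 0 + 1 := by linarith
  have hcs := sq_sum_le_card_mul_sum_sq (s := (univ : Finset (Fin 7))) (f := fun i => D i.succ)
  simp only [card_univ, Fintype.card_fin, sq] at hcs
  push_cast at hcs
  rw [hs, hq] at hcs
  have ha0 : 0 ≤ D 0 := by nlinarith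
  have ha3 : D 0 ≤ 3 := by nlinarith
  have hsub : ∑ i : Fin 7, D i.succ * (D i.succ - 1)
      = (D 0 * D 0 + 1) - (1 - 3 * D 0) := by
    simp only [mul_sub, mul_one]
    rw [Finset.sum_sub_distrib, hs, hq]
  have hadd : ∑ i : Fin 7, D i.succ * (D i.succ + 1)
      = (D 0 * D 0 + 1) + (1 - 3 * D 0) := by
    simp only [mul_add, mul_one]
    rw [Finset.sum_add_distrib, hs, hq]
  have h03 : D 0 = 0 ∨ D 0 = 1 ∨ D 0 = 2 ∨ D 0 = 3 := by omega
  clear hcs h1 h2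
  rcases h03 with ha | ha | ha | ha
  · -- a = 0 : one coordinate is 1, rest 0
    left
    rw [ha] at hsub hs
    norm_num at hsub hs
    have hz := (Finset.sum_eq_zero_iff_of_nonneg
      (fun i _ => int_nonneg_mul_sub (D i.succ))).1 hsub
    have hv : ∀ i : Fin 7, D i.succ = 0 ∨ D i.succ = 1 := by
      intro i
      have := hz i (mem_univ i)
      rcases mul_eq_zero.1 this with h | h
      · exact Or.inl h
      · exact Or.inr (by omega)
    obtain ⟨i, hi⟩ : ∃ i : Fin 7, D i.succ = 1 := by
      by_contra hcon
      push_neg at hcon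
      have : ∑ i : Fin 7, D i.succ = 0 :=
        Finset.sum_eq_zero fun i _ => (hv i).resolve_right (hcon i)
      omega
    have hsplit : D i.succ + ∑ j ∈ univ.erase i, D j.succ = ∑ j : Fin 7, D j.succ :=
      Finset.add_sum_erase _ (fun j : Fin 7 => D j.succ) (mem_univ i)
    have hrest : ∀ j : Fin 7, j ≠ i → D j.succ = 0 := by
      have h0 : ∑ j ∈ univ.erase i, D j.succ = 0 := by omega
      have := (Finset.sum_eq_zero_iff_of_nonneg
        (fun j _ => by rcases hv j with h | h <;> omega)).1 h0
      intro j hj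
      exact this j (Finset.mem_erase.2 ⟨hj, mem_univ j⟩)
    refine ⟨i, funext fun k => ?_⟩
    refine Fin.cases ?_ (fun m => ?_) k
    · rw [Pi.single_eq_of_ne (zero_ne_succ i)]; exact ha
    · by_cases hm : m = i
      · subst hm; rw [Pi.single_eq_same]; exact hi
      · rw [Pi.single_eq_of_ne (fun hc => hm (Fin.succ_injective _ hc))]
        exact hrest m hm
  · -- a = 1 : two coordinates are -1, rest 0
    right; left
    rw [ha] at hadd hs
    norm_num at hadd hs
    have hz := (Finset.sum_eq_zero_iff_of_nonneg
      (fun i _ => int_nonneg_mul_add (D i.succ))).1 hadd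
    have hv : ∀ i : Fin 7, D i.succ = 0 ∨ D i.succ = -1 := by
      intro i
      have := hz i (mem_univ i)
      rcases mul_eq_zero.1 this with h | h
      · exact Or.inl h
      · exact Or.inr (by omega)
    obtain ⟨i, hi⟩ : ∃ i : Fin 7, D i.succ = -1 := by
      by_contra hcon
      push_neg at hcon
      have : ∑ i : Fin 7, D i.succ = 0 :=
        Finset.sum_eq_zero fun i _ => (hv i).resolve_right (hcon i)
      omega
    have hsplit : D i.succ + ∑ j ∈ univ.erase i, D j.succ = ∑ j : Fin 7, D j.succ :=
      Finset.add_sum_erase _ (fun j : Fin 7 => D j.succ) (mem_univ i)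
    obtain ⟨j, hji, hj⟩ : ∃ j : Fin 7, j ≠ i ∧ D j.succ = -1 := by
      by_contra hcon
      push_neg at hcon
      have : ∑ j ∈ univ.erase i, D j.succ = 0 :=
        Finset.sum_eq_zero fun j hjm =>
          (hv j).resolve_right (hcon j (Finset.mem_erase.1 hjm).1)
      omega
    have hsplit2 : D j.succ + ∑ k ∈ (univ.erase i).erase j, D k.succ
        = ∑ k ∈ univ.erase i, D k.succ :=
      Finset.add_sum_erase _ (fun k : Fin 7 => D k.succ)
        (Finset.mem_erase.2 ⟨hji, mem_univ j⟩)
    have hrest : ∀ k : Fin 7, k ≠ i → k ≠ j → D k.succ = 0 := by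
      have h0 : ∑ k ∈ (univ.erase i).erase j, D k.succ = 0 := by omega
      have := (Finset.sum_eq_zero_iff_of_nonpos
        (fun k _ => by rcases hv k with h | h <;> omega)).1 h0
      intro k hki hkj
      exact this k (Finset.mem_erase.2 ⟨hkj, Finset.mem_erase.2 ⟨hki, mem_univ k⟩⟩)
    have hgoal : ∀ p q : Fin 7, p < q → D p.succ = -1 → D q.succ = -1 →
        (∀ k : Fin 7, k ≠ p → k ≠ q → D k.succ = 0) →
        D = Pi.single (0 : Fin 8) 1 - Pi.single p.succ 1 - Pi.single q.succ 1 := by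
      intro p q hpq hp hq' hk
      funext k
      refine Fin.cases ?_ (fun m => ?_) k
      · simp only [Pi.sub_apply, Pi.single_eq_same,
          Pi.single_eq_of_ne (zero_ne_succ p), Pi.single_eq_of_ne (zero_ne_succ q)]
        omega
      · simp only [Pi.sub_apply, Pi.single_eq_of_ne (Fin.succ_ne_zero m)]
        by_cases hm : m = p
        · subst hm
          rw [Pi.single_eq_same, Pi.single_eq_of_ne
            (fun hc => absurd (Fin.succ_injective _ hc) (ne_of_lt hpq))]
          omega
        · by_cases hm2 : m = q
          · subst hm2
            rw [Pi.single_eq_same, Pi.single_eq_of_ne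
              (fun hc => hm (Fin.succ_injective _ hc))]
            omega
          · rw [Pi.single_eq_of_ne (fun hc => hm (Fin.succ_injective _ hc)),
              Pi.single_eq_of_ne (fun hc => hm2 (Fin.succ_injective _ hc))]
            have := hk m hm hm2
            omega
    rcases lt_or_gt_of_ne hji with hlt | hgt
    · exact ⟨j, i, hlt, hgoal j i hlt hj hi (fun k hkj hki => hrest k hki hkj)⟩
    · exact ⟨i, j, hgt, hgoal i j hgt hi hj (fun k hki hkj => hrest k hki hkj)⟩
  · -- a = 2 : two coordinates are 0, rest -1
    right; right; left
    rw [ha] at hadd hs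
    norm_num at hadd hs
    have hz := (Finset.sum_eq_zero_iff_of_nonneg
      (fun i _ => int_nonneg_mul_add (D i.succ))).1 hadd
    have hv : ∀ i : Fin 7, D i.succ = 0 ∨ D i.succ = -1 := by
      intro i
      have := hz i (mem_univ i)
      rcases mul_eq_zero.1 this with h | h
      · exact Or.inl h
      · exact Or.inr (by omega)
    obtain ⟨i, hi⟩ : ∃ i : Fin 7, D i.succ = 0 := by
      by_contra hcon
      push_neg at hcon
      have : ∑ i : Fin 7, D i.succ = ∑ _i : Fin 7, (-1 : ℤ) :=
        Finset.sum_congr rfl fun i _ => (hv i).resolve_left (hcon i)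
      simp at this
      omega
    have hsplit : D i.succ + ∑ j ∈ univ.erase i, D j.succ = ∑ j : Fin 7, D j.succ :=
      Finset.add_sum_erase _ (fun j : Fin 7 => D j.succ) (mem_univ i)
    obtain ⟨j, hji, hj⟩ : ∃ j : Fin 7, j ≠ i ∧ D j.succ = 0 := by
      by_contra hcon
      push_neg at hcon
      have : ∑ j ∈ univ.erase i, D j.succ = ∑ _j ∈ univ.erase i, (-1 : ℤ) :=
        Finset.sum_congr rfl fun j hjm =>
          (hv j).resolve_left (hcon j (Finset.mem_erase.1 hjm).1)
      rw [Finset.sum_const, Finset.card_erase_of_mem (mem_univ i)] at this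
      simp at this
      omega
    have hsplit2 : D j.succ + ∑ k ∈ (univ.erase i).erase j, D k.succ
        = ∑ k ∈ univ.erase i, D k.succ :=
      Finset.add_sum_erase _ (fun k : Fin 7 => D k.succ)
        (Finset.mem_erase.2 ⟨hji, mem_univ j⟩)
    have hrest : ∀ k : Fin 7, k ≠ i → k ≠ j → D k.succ = -1 := by
      have hcard : ((univ.erase i).erase j).card = 5 := by
        rw [Finset.card_erase_of_mem (Finset.mem_erase.2 ⟨hji, mem_univ j⟩),
          Finset.card_erase_of_mem (mem_univ i)]
        simp
      have h0 : ∑ k ∈ (univ.erase i).erase j, (D k.succ + 1) = 0 := by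
        rw [Finset.sum_add_distrib, Finset.sum_const, hcard]
        simp only [nsmul_eq_mul]
        push_cast
        omega
      have := (Finset.sum_eq_zero_iff_of_nonneg
        (fun k _ => by rcases hv k with h | h <;> omega)).1 h0
      intro k hki hkj
      have := this k (Finset.mem_erase.2 ⟨hkj, Finset.mem_erase.2 ⟨hki, mem_univ k⟩⟩)
      omega
    have hgoal : ∀ p q : Fin 7, p < q → D p.succ = 0 → D q.succ = 0 →
        (∀ k : Fin 7, k ≠ p → k ≠ q → D k.succ = -1) →
        D = (fun m => if m = 0 then 2 else -1) + Pi.single p.succ 1 + Pi.single q.succ 1 := by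
      intro p q hpq hp hq' hk
      funext k
      refine Fin.cases ?_ (fun m => ?_) k
      · simp only [Pi.add_apply, reduceIte,
          Pi.single_eq_of_ne (zero_ne_succ p), Pi.single_eq_of_ne (zero_ne_succ q)]
        omega
      · simp only [Pi.add_apply, if_neg (Fin.succ_ne_zero m)]
        by_cases hm : m = p
        · subst hm
          rw [Pi.single_eq_same, Pi.single_eq_of_ne
            (fun hc => absurd (Fin.succ_injective _ hc) (ne_of_lt hpq))]
          omega
        · by_cases hm2 : m = q
          · subst hm2
            rw [Pi.single_eq_same, Pi.single_eq_of_ne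
              (fun hc => hm (Fin.succ_injective _ hc))]
            omega
          · rw [Pi.single_eq_of_ne (fun hc => hm (Fin.succ_injective _ hc)),
              Pi.single_eq_of_ne (fun hc => hm2 (Fin.succ_injective _ hc))]
            have := hk m hm hm2
            omega
    rcases lt_or_gt_of_ne hji with hlt | hgt
    · exact ⟨j, i, hlt, hgoal j i hlt hj hi (fun k hkj hki => hrest k hki hkj)⟩
    · exact ⟨i, j, hgt, hgoal i j hgt hi hj (fun k hki hkj => hrest k hki hkj)⟩
  · -- a = 3 : one coordinate is -2, rest -1
    right; right; right
    rw [ha] at hadd hs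
    norm_num at hadd hs
    have hub : ∀ i : Fin 7, D i.succ * (D i.succ + 1) ≤ 2 := by
      intro i
      calc D i.succ * (D i.succ + 1)
          ≤ ∑ k : Fin 7, D k.succ * (D k.succ + 1) :=
            Finset.single_le_sum (fun k _ => int_nonneg_mul_add (D k.succ)) (mem_univ i)
        _ = 2 := hadd
    have hv : ∀ i : Fin 7, -2 ≤ D i.succ ∧ D i.succ ≤ 1 := by
      intro i
      have h := hub i
      constructor <;> nlinarith [h]
    obtain ⟨i, hi⟩ : ∃ i : Fin 7, D i.succ = -2 := by
      by_contra hcon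
      push_neg at hcon
      have hge : ∀ k ∈ (univ : Finset (Fin 7)), (-1 : ℤ) ≤ D k.succ := by
        intro k _
        have h1 := (hv k).1
        have h2 := hcon k
        omega
      have := Finset.sum_le_sum hge
      rw [Finset.sum_const] at this
      simp only [card_univ, Fintype.card_fin, nsmul_eq_mul] at this
      push_cast at this
      omega
    have hsplit : D i.succ + ∑ j ∈ univ.erase i, D j.succ = ∑ j : Fin 7, D j.succ :=
      Finset.add_sum_erase _ (fun j : Fin 7 => D j.succ) (mem_univ i)
    have hz : ∀ j : Fin 7, j ≠ i → D j.succ * (D j.succ + 1) = 0 := by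
      have hsplitP : D i.succ * (D i.succ + 1)
          + ∑ j ∈ univ.erase i, D j.succ * (D j.succ + 1)
          = ∑ j : Fin 7, D j.succ * (D j.succ + 1) :=
        Finset.add_sum_erase _ (fun j : Fin 7 => D j.succ * (D j.succ + 1)) (mem_univ i)
      have h0 : ∑ j ∈ univ.erase i, D j.succ * (D j.succ + 1) = 0 := by
        rw [hi] at hsplitP
        omega
      have := (Finset.sum_eq_zero_iff_of_nonneg
        (fun j _ => int_nonneg_mul_add (D j.succ))).1 h0
      intro j hj
      exact this j (Finset.mem_erase.2 ⟨hj, mem_univ j⟩)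
    have hrest : ∀ j : Fin 7, j ≠ i → D j.succ = -1 := by
      have hvz : ∀ j ∈ univ.erase i, D j.succ = 0 ∨ D j.succ = -1 := by
        intro j hj
        rcases mul_eq_zero.1 (hz j (Finset.mem_erase.1 hj).1) with h | h
        · exact Or.inl h
        · exact Or.inr (by omega)
      have hcard : (univ.erase i).card = 6 := by
        rw [Finset.card_erase_of_mem (mem_univ i)]; simp
      have h0 : ∑ j ∈ univ.erase i, (D j.succ + 1) = 0 := by
        rw [Finset.sum_add_distrib, Finset.sum_const, hcard]
        simp only [nsmul_eq_mul]
        push_cast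
        omega
      have := (Finset.sum_eq_zero_iff_of_nonneg
        (fun j hj => by rcases hvz j hj with h | h <;> omega)).1 h0
      intro j hj
      have := this j (Finset.mem_erase.2 ⟨hj, mem_univ j⟩)
      omega
    refine ⟨i, funext fun k => ?_⟩
    refine Fin.cases ?_ (fun m => ?_) k
    · simp only [Pi.sub_apply, reduceIte, Pi.single_eq_of_ne (zero_ne_succ i)]
      omega
    · simp only [Pi.sub_apply, if_neg (Fin.succ_ne_zero m)]
      by_cases hm : m = i
      · subst hm; rw [Pi.single_eq_same]; omega
      · rw [Pi.single_eq_of_ne (fun hc => hm (Fin.succ_injective _ hc))]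
        have := hrest m hm
        omega

/-- The explicit finset of all 56 (-1)-classes. -/
def negClasses : Finset (Fin 8 → ℤ) :=
  ((univ : Finset (Fin 7)).image fun i => (Pi.single i.succ 1 : Fin 8 → ℤ)) ∪
  (((univ : Finset (Fin 7 × Fin 7)).filter fun p => p.1 < p.2).image fun p =>
      (Pi.single (0 : Fin 8) (1 : ℤ) - Pi.single p.1.succ 1 - Pi.single p.2.succ 1)) ∪
  (((univ : Finset (Fin 7 × Fin 7)).filter fun p => p.1 < p.2).image fun p =>
      ((fun m => if m = 0 then (2 : ℤ) else -1) + Pi.single p.1.succ 1 + Pi.single p.2.succ 1)) ∪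
  ((univ : Finset (Fin 7)).image fun i =>
      ((fun m => if m = (0 : Fin 8) then (3 : ℤ) else -1) - Pi.single i.succ 1))

lemma neg1 : ∀ i : Fin 7, isNegClass (Pi.single i.succ 1) := by
  unfold isNegClass; decide

lemma neg2 : ∀ p : Fin 7 × Fin 7, p.1 < p.2 →
    isNegClass (Pi.single (0 : Fin 8) (1 : ℤ) - Pi.single p.1.succ 1 - Pi.single p.2.succ 1) := by
  unfold isNegClass; decide

lemma neg3 : ∀ p : Fin 7 × Fin 7, p.1 < p.2 →
    isNegClass ((fun m => if m = 0 then (2 : ℤ) else -1)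
      + Pi.single p.1.succ 1 + Pi.single p.2.succ 1) := by
  unfold isNegClass; decide

lemma neg4 : ∀ i : Fin 7,
    isNegClass ((fun m => if m = (0 : Fin 8) then (3 : ℤ) else -1) - Pi.single i.succ 1) := by
  unfold isNegClass; decide

set_option maxRecDepth 20000 in
lemma negClasses_card : negClasses.card = 56 := by decide

lemma mem_negClasses {D : Fin 8 → ℤ} : D ∈ negClasses ↔ isNegClass D := by
  unfold negClasses
  simp only [Finset.mem_union, Finset.mem_image, Finset.mem_filter, Finset.mem_univ, true_and]
  constructor
  · rintro (((⟨i, rfl⟩ | ⟨p, hp, rfl⟩) | ⟨p, hp, rfl⟩) | ⟨i, rfl⟩)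
    exacts [neg1 i, neg2 p hp, neg3 p hp, neg4 i]
  · intro h
    rcases classify D h with ⟨i, rfl⟩ | ⟨i, j, hij, rfl⟩ | ⟨i, j, hij, rfl⟩ | ⟨i, rfl⟩
    · exact Or.inl (Or.inl (Or.inl ⟨i, rfl⟩))
    · exact Or.inl (Or.inl (Or.inr ⟨(i, j), hij, rfl⟩))
    · exact Or.inl (Or.inr ⟨(i, j), hij, rfl⟩)
    · exact Or.inr ⟨i, rfl⟩

lemma setOf_eq : {D : Fin 8 → ℤ | isNegClass D} = ↑negClasses := by
  ext D
  simp only [Set.mem_setOf_eq, Finset.mem_coe, mem_negClasses]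

theorem stmt7 :
    (∀ D : Fin 8 → ℤ, isNegClass D →
      (∃ i : Fin 7, D = Pi.single i.succ 1) ∨
      (∃ i j : Fin 7, i < j ∧
        D = Pi.single (0 : Fin 8) 1 - Pi.single i.succ 1 - Pi.single j.succ 1) ∨
      (∃ i j : Fin 7, i < j ∧
        D = (fun m => if m = 0 then 2 else -1) + Pi.single i.succ 1 + Pi.single j.succ 1) ∨
      (∃ i : Fin 7, D = (fun m => if m = 0 then 3 else -1) - Pi.single i.succ 1)) ∧
    {D : Fin 8 → ℤ | isNegClass D}.ncard = 56 := by
  refine ⟨classify, ?_⟩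
  rw [setOf_eq, Set.ncard_coe_finset, negClasses_card]
end

section
/- In Pic(S_7) ≅ ℤ^8, the anticanonical class -K is the unique class expressible as D_1 + D_2 with D_1, D_2 (-1)-classes satisfying D_1·D_2 = 2; i.e., -K is the unique (2)-ruling of S_7. Moreover, -K is expressible in exactly 28 ways as an unordered sum of two (-1)-classes, namely e_i + (3e_0 - Σ e_k - e_i) and (e_0 - e_i - e_j) + (2e_0 - Σ e_k + e_i + e_j). -/
/-!
If `D₁, D₂` are (-1)-classes with `D₁·D₂ = 2`, then `v = D₁ + D₂ + K` satisfies `v·K = 0` and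
`v·v = 0`. The orthogonal complement of `K` is negative definite: for `v·K = 0` the tail
`(v₁, …, v₇)` sums to `-3v₀`, and Cauchy–Schwarz `(∑ vᵢ)² ≤ 7 ∑ vᵢ²` forces `v₀ = 0` when
`v·v = 0`. Hence `v = 0`, i.e. `D₁ + D₂ = -K`.

For the count, Cauchy–Schwarz also gives `D₀ ≥ 0` for every (-1)-class `D`. In a pair with sum
`-K` the degrees add up to `3`, so one member has degree `0` or `1`. Up to sign its tail then
satisfies `∑ xᵢ² = ∑ xᵢ`, so all its entries lie in `{0, 1}`: the member is `eᵢ` or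
`e₀ - eᵢ - eⱼ`, giving `7 + 21` pairs.
-/

open Finset

section ZeroOneValued

variable {ι : Type*} [Fintype ι] {f : ι → ℤ}

lemma eq_zero_or_eq_one_of_sum_sq_eq_sum (h : ∑ i, f i ^ 2 = ∑ i, f i) (i : ι) :
    f i = 0 ∨ f i = 1 := by
  have hterms : ∀ j ∈ univ, f j ^ 2 - f j = 0 :=
    (sum_eq_zero_iff_of_nonneg fun j _ => sub_nonneg.2 (Int.le_self_sq _)).1
      (by rw [sum_sub_distrib, h, sub_self])
  have hprod : f i * (f i - 1) = 0 := by linear_combination hterms i (mem_univ i)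
  rcases mul_eq_zero.1 hprod with h0 | h1
  · exact .inl h0
  · exact .inr (by linarith)

lemma eq_sum_single_of_zero_or_one [DecidableEq ι] (hf : ∀ i, f i = 0 ∨ f i = 1) :
    f = ∑ i ∈ univ.filter (f · = 1), Pi.single i 1 := by
  funext i
  rcases hf i with h | h <;> simp [Finset.sum_apply, Finset.sum_pi_single, h]

lemma sum_eq_card_filter_of_zero_or_one (hf : ∀ i, f i = 0 ∨ f i = 1) :
    ∑ i, f i = #(univ.filter (f · = 1)) := by
  rw [natCast_card_filter]
  exact sum_congr rfl fun i _ => by rcases hf i with h | h <;> simp [h]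

lemma exists_eq_single_of_sum_eq_one [DecidableEq ι] (hf : ∀ i, f i = 0 ∨ f i = 1)
    (h : ∑ i, f i = 1) :
    ∃ i, f = Pi.single i 1 := by
  have hcard : #(univ.filter (f · = 1)) = 1 := by
    exact_mod_cast (sum_eq_card_filter_of_zero_or_one hf).symm.trans h
  obtain ⟨i, hi⟩ := card_eq_one.1 hcard
  exact ⟨i, by rw [eq_sum_single_of_zero_or_one hf, hi, sum_singleton]⟩

lemma exists_eq_single_add_single_of_sum_eq_two [DecidableEq ι]
    (hf : ∀ i, f i = 0 ∨ f i = 1) (h : ∑ i, f i = 2) :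
    ∃ i j, i ≠ j ∧ f = Pi.single i 1 + Pi.single j 1 := by
  have hcard : #(univ.filter (f · = 1)) = 2 := by
    exact_mod_cast (sum_eq_card_filter_of_zero_or_one hf).symm.trans h
  obtain ⟨i, j, hij, hS⟩ := card_eq_two.1 hcard
  exact ⟨i, j, hij, by rw [eq_sum_single_of_zero_or_one hf, hS, sum_pair hij]⟩

end ZeroOneValued

lemma dot_comm (x y : Fin 8 → ℤ) : dot x y = dot y x := by
  simp [dot, mul_comm]

lemma dot_add_left (x y z : Fin 8 → ℤ) : dot (x + y) z = dot x z + dot y z := by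
  simp only [dot, Pi.add_apply, add_mul, sum_add_distrib]
  ring

lemma dot_add_right (x y z : Fin 8 → ℤ) : dot x (y + z) = dot x y + dot x z := by
  rw [dot_comm, dot_add_left, dot_comm y, dot_comm z]

lemma dot_K_K : dot K K = 2 := by decide

lemma dot_K_right (v : Fin 8 → ℤ) : dot v K = -3 * v 0 - ∑ i : Fin 7, v i.succ := by
  simp [dot, K, Fin.succ_ne_zero]
  ring

lemma dot_self_eq (v : Fin 8 → ℤ) : dot v v = v 0 ^ 2 - ∑ i : Fin 7, v i.succ ^ 2 := by
  simp [dot, sq]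

lemma sq_sum_succ_le (v : Fin 8 → ℤ) :
    (∑ i : Fin 7, v i.succ) ^ 2 ≤ 7 * ∑ i : Fin 7, v i.succ ^ 2 := by
  simpa using sq_sum_le_card_mul_sum_sq (s := univ) (f := fun i : Fin 7 => v i.succ)

lemma eq_zero_of_dot_K_eq_zero_of_dot_self_eq_zero {v : Fin 8 → ℤ} (hK : dot v K = 0)
    (hv : dot v v = 0) : v = 0 := by
  rw [dot_K_right] at hK
  rw [dot_self_eq] at hv
  have hCS := sq_sum_succ_le v
  rw [show ∑ i : Fin 7, v i.succ = -3 * v 0 by linarith,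
    show ∑ i : Fin 7, v i.succ ^ 2 = v 0 ^ 2 by linarith] at hCS
  have h0 : v 0 = 0 := by nlinarith [sq_nonneg (v 0)]
  have htail : ∀ i ∈ (univ : Finset (Fin 7)), v i.succ ^ 2 = 0 :=
    (sum_eq_zero_iff_of_nonneg fun i _ => sq_nonneg _).1 (by rw [h0] at hv; linarith)
  funext m
  induction m using Fin.cases with
  | zero => exact h0
  | succ i => exact pow_eq_zero_iff two_ne_zero |>.1 (htail i (mem_univ i))

instance : DecidablePred isNegClass := fun D => by unfold isNegClass; infer_instance

namespace isNegClass

variable {a : Fin 8 → ℤ}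

lemma add_eq_neg_K {b : Fin 8 → ℤ} (ha : isNegClass a) (hb : isNegClass b) (hab : dot a b = 2) :
    a + b = -K := by
  have hK : dot (a + b + K) K = 0 := by
    rw [dot_add_left, dot_add_left, ha.2, hb.2, dot_K_K]
    norm_num
  have hv : dot (a + b + K) (a + b + K) = 0 := by
    simp only [dot_add_left, dot_add_right, dot_comm b a, dot_comm K a, dot_comm K b,
      ha.1, hb.1, ha.2, hb.2, dot_K_K, hab]
    norm_num
  exact eq_neg_of_add_eq_zero_left (eq_zero_of_dot_K_eq_zero_of_dot_self_eq_zero hK hv)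

lemma sum_succ (ha : isNegClass a) : ∑ i : Fin 7, a i.succ = 1 - 3 * a 0 := by
  linarith [ha.2, dot_K_right a]

lemma sum_sq_succ (ha : isNegClass a) : ∑ i : Fin 7, a i.succ ^ 2 = a 0 ^ 2 + 1 := by
  linarith [ha.1, dot_self_eq a]

lemma coord_zero_nonneg (ha : isNegClass a) : 0 ≤ a 0 := by
  have hCS := sq_sum_succ_le a
  rw [ha.sum_succ, ha.sum_sq_succ] at hCS
  nlinarith

lemma eq_single_succ (ha : isNegClass a) (h0 : a 0 = 0) :
    ∃ i : Fin 7, a = Pi.single i.succ 1 := by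
  have hsum : ∑ i : Fin 7, a i.succ = 1 := by rw [ha.sum_succ, h0]; norm_num
  have hsq : ∑ i : Fin 7, a i.succ ^ 2 = ∑ i : Fin 7, a i.succ := by
    rw [ha.sum_sq_succ, hsum, h0]; norm_num
  obtain ⟨i, hi⟩ := exists_eq_single_of_sum_eq_one
    (eq_zero_or_eq_one_of_sum_sq_eq_sum hsq) hsum
  refine ⟨i, funext fun m => ?_⟩
  induction m using Fin.cases with
  | zero => simp [h0]
  | succ k => simpa [Pi.single_apply] using congrFun hi k

lemma eq_single_zero_sub_sub (ha : isNegClass a) (h0 : a 0 = 1) :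
    ∃ i j : Fin 7, i < j ∧ a = Pi.single 0 1 - Pi.single i.succ 1 - Pi.single j.succ 1 := by
  have hsum : ∑ i : Fin 7, -a i.succ = 2 := by rw [sum_neg_distrib, ha.sum_succ, h0]; norm_num
  have hsq : ∑ i : Fin 7, (-a i.succ) ^ 2 = ∑ i : Fin 7, -a i.succ := by
    simp only [neg_sq]
    rw [ha.sum_sq_succ, hsum, h0]
    norm_num
  obtain ⟨i, j, hij, hf⟩ := exists_eq_single_add_single_of_sum_eq_two
    (eq_zero_or_eq_one_of_sum_sq_eq_sum hsq) hsum
  have ha' : a = Pi.single 0 1 - Pi.single i.succ 1 - Pi.single j.succ 1 := by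
    funext m
    induction m using Fin.cases with
    | zero => simp [h0]
    | succ k =>
      have := congrFun hf k
      simp only [Pi.add_apply, Pi.single_apply] at this
      simp only [Pi.sub_apply, Pi.single_eq_of_ne (Fin.succ_ne_zero k), Pi.single_apply,
        Fin.succ_inj]
      linarith
  rcases hij.lt_or_gt with hlt | hgt
  · exact ⟨i, j, hlt, ha'⟩
  · exact ⟨j, i, hgt, ha'.trans (sub_right_comm _ _ _)⟩

end isNegClass

def pairA (i : Fin 7) : Finset (Fin 8 → ℤ) :=
  {Pi.single i.succ 1, (fun m => if m = 0 then 3 else -1) - Pi.single i.succ 1}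

def pairB (i j : Fin 7) : Finset (Fin 8 → ℤ) :=
  {Pi.single (0 : Fin 8) 1 - Pi.single i.succ 1 - Pi.single j.succ 1,
   (fun m => if m = 0 then 2 else -1) + Pi.single i.succ 1 + Pi.single j.succ 1}

lemma pairA_eq : ∀ i, pairA i = {Pi.single i.succ 1, -K - Pi.single i.succ 1} := by
  decide

lemma pairB_eq : ∀ i j, pairB i j =
    {Pi.single 0 1 - Pi.single i.succ 1 - Pi.single j.succ 1,
     -K - (Pi.single 0 1 - Pi.single i.succ 1 - Pi.single j.succ 1)} := by
  decide

def IsNegKPair (p : Finset (Fin 8 → ℤ)) : Prop :=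
  p.card = 2 ∧ (∀ x ∈ p, isNegClass x) ∧ ∑ x ∈ p, x = -K

instance : DecidablePred IsNegKPair := fun p => by unfold IsNegKPair; infer_instance

lemma pair_neg_K_sub_eq_pairA_or_eq_pairB {a : Fin 8 → ℤ} (ha : isNegClass a) (h : a 0 ≤ 1) :
    (∃ i, {a, -K - a} = pairA i) ∨ ∃ i j, i < j ∧ {a, -K - a} = pairB i j := by
  rcases (show a 0 = 0 ∨ a 0 = 1 by have := ha.coord_zero_nonneg; omega) with h0 | h1
  · obtain ⟨i, rfl⟩ := ha.eq_single_succ h0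
    exact .inl ⟨i, (pairA_eq i).symm⟩
  · obtain ⟨i, j, hij, rfl⟩ := ha.eq_single_zero_sub_sub h1
    exact .inr ⟨i, j, hij, (pairB_eq i j).symm⟩

lemma IsNegKPair.eq_pairA_or_eq_pairB {p : Finset (Fin 8 → ℤ)} (hp : IsNegKPair p) :
    (∃ i, p = pairA i) ∨ ∃ i j, i < j ∧ p = pairB i j := by
  obtain ⟨hcard, hneg, hsum⟩ := hp
  obtain ⟨a, b, hab, rfl⟩ := card_eq_two.1 hcard
  rw [sum_pair hab] at hsum
  have hdeg : a 0 + b 0 = 3 := by simpa [K] using congrFun hsum 0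
  rcases le_or_gt (a 0) 1 with ha | ha
  · rw [eq_sub_of_add_eq' hsum]
    exact pair_neg_K_sub_eq_pairA_or_eq_pairB (hneg a (by simp)) ha
  · rw [pair_comm, eq_sub_of_add_eq hsum]
    exact pair_neg_K_sub_eq_pairA_or_eq_pairB (hneg b (by simp)) (by linarith)

def negKPairs : Finset (Finset (Fin 8 → ℤ)) :=
  univ.image pairA ∪
    (univ.filter fun ij : Fin 7 × Fin 7 => ij.1 < ij.2).image fun ij => pairB ij.1 ij.2

lemma isNegKPair_iff_mem_negKPairs {p : Finset (Fin 8 → ℤ)} :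
    IsNegKPair p ↔ p ∈ negKPairs := by
  have hA : ∀ i, IsNegKPair (pairA i) := by decide
  have hB : ∀ i j, i < j → IsNegKPair (pairB i j) := by decide
  simp only [negKPairs, mem_union, mem_image, mem_univ, true_and, mem_filter, Prod.exists]
  constructor
  · intro hp
    rcases hp.eq_pairA_or_eq_pairB with ⟨i, rfl⟩ | ⟨i, j, hij, rfl⟩
    · exact .inl ⟨i, rfl⟩
    · exact .inr ⟨i, j, hij, rfl⟩
  · rintro (⟨i, rfl⟩ | ⟨i, j, hij, rfl⟩)
    exacts [hA i, hB i j hij]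

lemma ncard_setOf_isNegKPair : {p | IsNegKPair p}.ncard = 28 := by
  rw [show {p | IsNegKPair p} = ↑negKPairs from Set.ext fun _ => isNegKPair_iff_mem_negKPairs,
    Set.ncard_coe_finset]
  decide

theorem stmt9 :
    {R : Fin 8 → ℤ | ∃ D1 D2, isNegClass D1 ∧ isNegClass D2 ∧ dot D1 D2 = 2 ∧
      R = D1 + D2} = {-K} ∧
    {p : Finset (Fin 8 → ℤ) | p.card = 2 ∧ (∀ x ∈ p, isNegClass x) ∧
      ∑ x ∈ p, x = -K}.ncard = 28 ∧
    (∀ p : Finset (Fin 8 → ℤ), p.card = 2 → (∀ x ∈ p, isNegClass x) →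
      ∑ x ∈ p, x = -K →
      (∃ i : Fin 7, p = {Pi.single i.succ 1,
        (fun m => if m = 0 then 3 else -1) - Pi.single i.succ 1}) ∨
      (∃ i j : Fin 7, i < j ∧ p =
        {Pi.single (0 : Fin 8) 1 - Pi.single i.succ 1 - Pi.single j.succ 1,
         (fun m => if m = 0 then 2 else -1) + Pi.single i.succ 1 + Pi.single j.succ 1})) := by
  refine ⟨Set.ext fun R => ⟨?_, ?_⟩, ncard_setOf_isNegKPair,
    fun p hcard hneg hsum => IsNegKPair.eq_pairA_or_eq_pairB ⟨hcard, hneg, hsum⟩⟩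
  · rintro ⟨D1, D2, h1, h2, h12, rfl⟩
    exact h1.add_eq_neg_K h2 h12
  · rintro rfl
    exact ⟨Pi.single 1 1, -K - Pi.single 1 1, by decide, by decide, by decide, by abel⟩
end

section
/- In Pic(S_7) ≅ ℤ^8, for any two distinct (-1)-classes D_1 and D_2, the intersection number D_1·D_2 is 0, 1, or 2; in particular it is nonnegative. -/
open Finset
set_option maxHeartbeats 1000000

/-- Negative semidefiniteness of the form on K-orthogonal vectors (coordinates). -/
lemma aux_le (a b c d e f g i : ℤ) (h : a * -3 - (b+c+d+e+f+g+i) = 0) :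
    a*a - (b*b+c*c+d*d+e*e+f*f+g*g+i*i) ≤ 0 := by
  have key : 7*(b*b+c*c+d*d+e*e+f*f+g*g+i*i) - 9*(a*a) =
      (b-c)^2+(b-d)^2+(b-e)^2+(b-f)^2+(b-g)^2+(b-i)^2
      +(c-d)^2+(c-e)^2+(c-f)^2+(c-g)^2+(c-i)^2
      +(d-e)^2+(d-f)^2+(d-g)^2+(d-i)^2
      +(e-f)^2+(e-g)^2+(e-i)^2
      +(f-g)^2+(f-i)^2+(g-i)^2 := by
    linear_combination (3*a - (b+c+d+e+f+g+i)) * h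
  have hpos : (0:ℤ) ≤ (b-c)^2+(b-d)^2+(b-e)^2+(b-f)^2+(b-g)^2+(b-i)^2
      +(c-d)^2+(c-e)^2+(c-f)^2+(c-g)^2+(c-i)^2
      +(d-e)^2+(d-f)^2+(d-g)^2+(d-i)^2
      +(e-f)^2+(e-g)^2+(e-i)^2
      +(f-g)^2+(f-i)^2+(g-i)^2 := by positivity
  linarith [key, hpos, mul_self_nonneg a]

/-- Definiteness: a K-orthogonal vector of square zero is zero (coordinates). -/
lemma aux_zero (a b c d e f g i : ℤ) (h : a * -3 - (b+c+d+e+f+g+i) = 0)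
    (h0 : a*a - (b*b+c*c+d*d+e*e+f*f+g*g+i*i) = 0) :
    a = 0 ∧ b = 0 ∧ c = 0 ∧ d = 0 ∧ e = 0 ∧ f = 0 ∧ g = 0 ∧ i = 0 := by
  have key : 7*(b*b+c*c+d*d+e*e+f*f+g*g+i*i) - 9*(a*a) =
      (b-c)^2+(b-d)^2+(b-e)^2+(b-f)^2+(b-g)^2+(b-i)^2
      +(c-d)^2+(c-e)^2+(c-f)^2+(c-g)^2+(c-i)^2
      +(d-e)^2+(d-f)^2+(d-g)^2+(d-i)^2
      +(e-f)^2+(e-g)^2+(e-i)^2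
      +(f-g)^2+(f-i)^2+(g-i)^2 := by
    linear_combination (3*a - (b+c+d+e+f+g+i)) * h
  have hpos : (0:ℤ) ≤ (b-c)^2+(b-d)^2+(b-e)^2+(b-f)^2+(b-g)^2+(b-i)^2
      +(c-d)^2+(c-e)^2+(c-f)^2+(c-g)^2+(c-i)^2
      +(d-e)^2+(d-f)^2+(d-g)^2+(d-i)^2
      +(e-f)^2+(e-g)^2+(e-i)^2
      +(f-g)^2+(f-i)^2+(g-i)^2 := by positivity
  have haa : a * a ≤ 0 := by linarith
  have ha : a = 0 := mul_self_eq_zero.mp (le_antisymm haa (mul_self_nonneg a))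
  subst ha
  have hb : b = 0 := mul_self_eq_zero.mp (le_antisymm (by linarith [mul_self_nonneg c, mul_self_nonneg d, mul_self_nonneg e, mul_self_nonneg f, mul_self_nonneg g, mul_self_nonneg i]) (mul_self_nonneg b))
  have hc : c = 0 := mul_self_eq_zero.mp (le_antisymm (by linarith [mul_self_nonneg b, mul_self_nonneg d, mul_self_nonneg e, mul_self_nonneg f, mul_self_nonneg g, mul_self_nonneg i]) (mul_self_nonneg c))
  have hd : d = 0 := mul_self_eq_zero.mp (le_antisymm (by linarith [mul_self_nonneg b, mul_self_nonneg c, mul_self_nonneg e, mul_self_nonneg f, mul_self_nonneg g, mul_self_nonneg i]) (mul_self_nonneg d))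
  have he : e = 0 := mul_self_eq_zero.mp (le_antisymm (by linarith [mul_self_nonneg b, mul_self_nonneg c, mul_self_nonneg d, mul_self_nonneg f, mul_self_nonneg g, mul_self_nonneg i]) (mul_self_nonneg e))
  have hf : f = 0 := mul_self_eq_zero.mp (le_antisymm (by linarith [mul_self_nonneg b, mul_self_nonneg c, mul_self_nonneg d, mul_self_nonneg e, mul_self_nonneg g, mul_self_nonneg i]) (mul_self_nonneg f))
  have hg : g = 0 := mul_self_eq_zero.mp (le_antisymm (by linarith [mul_self_nonneg b, mul_self_nonneg c, mul_self_nonneg d, mul_self_nonneg e, mul_self_nonneg f, mul_self_nonneg i]) (mul_self_nonneg g))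
  have hi : i = 0 := mul_self_eq_zero.mp (le_antisymm (by linarith [mul_self_nonneg b, mul_self_nonneg c, mul_self_nonneg d, mul_self_nonneg e, mul_self_nonneg f, mul_self_nonneg g]) (mul_self_nonneg i))
  exact ⟨rfl, hb, hc, hd, he, hf, hg, hi⟩

/-- Main coordinate computation. -/
lemma main_aux (a u1 u2 u3 u4 u5 u6 u7 b v1 v2 v3 v4 v5 v6 v7 : ℤ)
    (H1 : a*a - (u1*u1+u2*u2+u3*u3+u4*u4+u5*u5+u6*u6+u7*u7) = -1)
    (H1K : a * -3 - (u1+u2+u3+u4+u5+u6+u7) = -1)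
    (H2 : b*b - (v1*v1+v2*v2+v3*v3+v4*v4+v5*v5+v6*v6+v7*v7) = -1)
    (H2K : b * -3 - (v1+v2+v3+v4+v5+v6+v7) = -1)
    (hne : ¬(a = b ∧ u1 = v1 ∧ u2 = v2 ∧ u3 = v3 ∧ u4 = v4 ∧ u5 = v5 ∧ u6 = v6 ∧ u7 = v7)) :
    a*b - (u1*v1+u2*v2+u3*v3+u4*v4+u5*v5+u6*v6+u7*v7) = 0 ∨
    a*b - (u1*v1+u2*v2+u3*v3+u4*v4+u5*v5+u6*v6+u7*v7) = 1 ∨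
    a*b - (u1*v1+u2*v2+u3*v3+u4*v4+u5*v5+u6*v6+u7*v7) = 2 := by
  set M := a*b - (u1*v1+u2*v2+u3*v3+u4*v4+u5*v5+u6*v6+u7*v7) with hM
  -- lower bound via D1 - D2
  have hyK : (a-b) * -3 - ((u1-v1)+(u2-v2)+(u3-v3)+(u4-v4)+(u5-v5)+(u6-v6)+(u7-v7)) = 0 := by
    linarith
  have hy := aux_le _ _ _ _ _ _ _ _ hyK
  have hyE : (a-b)*(a-b) - ((u1-v1)*(u1-v1)+(u2-v2)*(u2-v2)+(u3-v3)*(u3-v3)+(u4-v4)*(u4-v4)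
      +(u5-v5)*(u5-v5)+(u6-v6)*(u6-v6)+(u7-v7)*(u7-v7)) = -2 - 2*M := by
    linear_combination H1 + H2 + 2*hM
  have hlow : -1 ≤ M := by linarith
  have hMne : M ≠ -1 := by
    intro hEq
    have h0 : (a-b)*(a-b) - ((u1-v1)*(u1-v1)+(u2-v2)*(u2-v2)+(u3-v3)*(u3-v3)+(u4-v4)*(u4-v4)
        +(u5-v5)*(u5-v5)+(u6-v6)*(u6-v6)+(u7-v7)*(u7-v7)) = 0 := by rw [hyE, hEq]; ring
    obtain ⟨e0,e1,e2,e3,e4,e5,e6,e7⟩ := aux_zero _ _ _ _ _ _ _ _ hyK h0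
    exact hne ⟨by linarith, by linarith, by linarith, by linarith, by linarith, by linarith,
      by linarith, by linarith⟩
  -- upper bound via W = (4M-2)(2D1+K) + 6(2D2+K)
  set c : ℤ := 4*M - 2 with hc
  have hWK : (c*(2*a-3)+6*(2*b-3)) * -3 -
      ((c*(2*u1+1)+6*(2*v1+1))+(c*(2*u2+1)+6*(2*v2+1))+(c*(2*u3+1)+6*(2*v3+1))
      +(c*(2*u4+1)+6*(2*v4+1))+(c*(2*u5+1)+6*(2*v5+1))+(c*(2*u6+1)+6*(2*v6+1))
      +(c*(2*u7+1)+6*(2*v7+1))) = 0 := by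
    linear_combination (2*c)*H1K + 12*H2K
  have hW := aux_le _ _ _ _ _ _ _ _ hWK
  have hWE : (c*(2*a-3)+6*(2*b-3))*(c*(2*a-3)+6*(2*b-3)) -
      ((c*(2*u1+1)+6*(2*v1+1))*(c*(2*u1+1)+6*(2*v1+1))
      +(c*(2*u2+1)+6*(2*v2+1))*(c*(2*u2+1)+6*(2*v2+1))
      +(c*(2*u3+1)+6*(2*v3+1))*(c*(2*u3+1)+6*(2*v3+1))
      +(c*(2*u4+1)+6*(2*v4+1))*(c*(2*u4+1)+6*(2*v4+1))
      +(c*(2*u5+1)+6*(2*v5+1))*(c*(2*u5+1)+6*(2*v5+1))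
      +(c*(2*u6+1)+6*(2*v6+1))*(c*(2*u6+1)+6*(2*v6+1))
      +(c*(2*u7+1)+6*(2*v7+1))*(c*(2*u7+1)+6*(2*v7+1))) = 6*c*c - 216 := by
    linear_combination (4*c^2)*H1 + (4*c^2+24*c)*H1K + 144*H2 + (24*c+144)*H2K
      - (12*c)*hc - (48*c)*hM
  have hcc : 6*c*c - 216 ≤ 0 := by rw [← hWE]; exact hW
  have hsq : (c-6)^2 = c*c - 12*c + 36 := by ring
  have hc6 : c ≤ 6 := by linarith [hsq, sq_nonneg (c-6)]
  have hup : M ≤ 2 := by omega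
  omega

theorem stmt19 (D1 D2 : Fin 8 → ℤ) (h1 : isNegClass D1) (h2 : isNegClass D2)
    (hne : D1 ≠ D2) :
    dot D1 D2 = 0 ∨ dot D1 D2 = 1 ∨ dot D1 D2 = 2 := by
  obtain ⟨H1, H1K⟩ := h1
  obtain ⟨H2, H2K⟩ := h2
  simp only [dot, K, Fin.sum_univ_seven, Fin.succ_ne_zero, if_false, if_true, ite_false,
    ite_true, mul_one, reduceIte] at H1 H1K H2 H2K ⊢
  refine main_aux _ _ _ _ _ _ _ _ _ _ _ _ _ _ _ _ H1 H1K H2 H2K ?_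
  rintro ⟨e0, e1, e2, e3, e4, e5, e6, e7⟩
  apply hne
  funext j
  fin_cases j
  exacts [e0, e1, e2, e3, e4, e5, e6, e7]
end
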